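/- Let φ_μ := (1/(2κ))·∑_{q=1}^r μ_q·x_q/q. For every P in the polynomial ring ℂ[x_1,x_2,…][λ_1,…,λ_r,μ_1,…,μ_r], one has Φ^−_λ(z)(φ_μ·P) − φ_μ·Φ^−_λ(z)(P) = f_κ(z;λ,μ)·P; that is, the commutator [Φ^−_λ(z), φ_μ·] of the annihilation part of the coherent-state field with multiplication by φ_μ is scalar multiplication by the Laurent polynomial f_κ(z;λ,μ). -/

import Mathlib

/-!
STATEMENT 8.
Fix r ≥ 1 and κ ≠ 0.  Work in R := ℂ[x_1,x_2,…][λ_1,…,λ_r,μ_1,…,μ_r]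
(= `MvPolynomial (ℕ ⊕ (Fin r ⊕ Fin r)) ℂ`, where `Sum.inl i` is x_{i+1},
`Sum.inr (Sum.inl p)` is λ_{p+1} and `Sum.inr (Sum.inr q)` is μ_{q+1}).
For m ≥ 1, a_m := 2κm·∂/∂x_m.  The annihilation part of the coherent-state
field is the Laurent polynomial in z (given coefficientwise by `PhiMinus`,
the coefficient of `z^e`):
  Φ^−_λ(z)P := (1/(2κ))·∑_{n=1}^r (λ_n/n)·∑_{m≥1} (−1)^{n−1}·C(m+n−1,n−1)·z^{−m−n}·(a_m P).
Let φ_μ := (1/(2κ))·∑_{q=1}^r μ_q·x_q/q and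
  f_κ(z;λ,μ) := (1/(2κ))·∑_{1≤p,q≤r} C(p+q,p)·((−1)^{p+1}/(p+q))·λ_p·μ_q·z^{−(p+q)}
(coefficientwise: `fk r κ e` is the coefficient of `z^e`).
Then for every P ∈ R and every e ∈ ℤ,
  [Φ^−_λ(z), φ_μ·] P = f_κ(z;λ,μ)·P, coefficientwise in z.
-/

noncomputable section

abbrev R' (r : ℕ) : Type := MvPolynomial (ℕ ⊕ (Fin r ⊕ Fin r)) ℂ

/-- `a_m := 2κ m ∂/∂x_m` (for m ≥ 1; gives 0 at m = 0). -/
def aR (r : ℕ) (κ : ℂ) (m : ℕ) (P : R' r) : R' r :=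
  (2 * κ * (m : ℂ)) • MvPolynomial.pderiv (Sum.inl (m - 1)) P

/-- The coefficient of `z^e` in `Φ^−_λ(z)P`.  For `n : Fin r` (math index
`(n:ℕ)+1`), the term with `z^{−m−(n+1)}` contributes at `e` iff
`e = −(m+(n:ℕ)+1)` with `m ≥ 1`, i.e. iff `e ≤ −((n:ℕ)+2)`, in which case
`m = (−e).toNat − ((n:ℕ)+1)`. -/
def PhiMinus (r : ℕ) (κ : ℂ) (P : R' r) (e : ℤ) : R' r :=
  ∑ n : Fin r,
    if e ≤ -(((n : ℕ) : ℤ) + 2) then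
      ((1 / (2 * κ)) * (1 / (((n : ℕ) : ℂ) + 1)) * (-1 : ℂ) ^ ((n : ℕ)) *
          (Nat.choose (((-e).toNat - ((n : ℕ) + 1)) + (n : ℕ)) ((n : ℕ)) : ℂ)) •
        (MvPolynomial.X (Sum.inr (Sum.inl n)) *
          aR r κ ((-e).toNat - ((n : ℕ) + 1)) P)
    else 0

/-- `φ_μ := (1/(2κ)) ∑_{q=1}^r μ_q x_q / q`. -/
def phiMu (r : ℕ) (κ : ℂ) : R' r :=
  ∑ q : Fin r,
    MvPolynomial.C (1 / (2 * κ * (((q : ℕ) : ℂ) + 1)))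
      * MvPolynomial.X (Sum.inr (Sum.inr q)) * MvPolynomial.X (Sum.inl (q : ℕ))

/-- The coefficient of `z^e` in `f_κ(z;λ,μ)`. -/
def fk (r : ℕ) (κ : ℂ) (e : ℤ) : R' r :=
  ∑ p : Fin r, ∑ q : Fin r,
    if ((p : ℕ) + (q : ℕ) + 2 : ℤ) = -e then
      MvPolynomial.C
        ((1 / (2 * κ)) * (Nat.choose ((p : ℕ) + (q : ℕ) + 2) ((p : ℕ) + 1) : ℂ) *
          (-1 : ℂ) ^ ((p : ℕ) + 2) / (((p : ℕ) : ℂ) + ((q : ℕ) : ℂ) + 2))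
        * MvPolynomial.X (Sum.inr (Sum.inl p)) * MvPolynomial.X (Sum.inr (Sum.inr q))
    else 0

/-!
Each `a_m` is a derivation, hence so is every coefficient of `Φ^−_λ(z)`, and the commutator
`[Φ^−_λ(z), φ_μ·]` is multiplication by `Φ^−_λ(z) φ_μ`. Since `a_m φ_μ = μ_m` for `m ≤ r`
(the factor `2κm` of `a_m` cancels the `1/(2κm)` in `φ_μ`), `Φ^−_λ(z) φ_μ` is a sum over pairs
`(n, m)`, and `C(m+n−1, n−1)/n = C(m+n, n)/(m+n)` turns its coefficients into those of `f_κ`.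
-/

lemma aR_mul (r : ℕ) (κ : ℂ) (m : ℕ) (F P : R' r) :
    aR r κ m (F * P) = aR r κ m F * P + F * aR r κ m P := by
  simp only [aR, MvPolynomial.pderiv_mul, smul_add, smul_mul_assoc, mul_smul_comm]

lemma PhiMinus_mul (r : ℕ) (κ : ℂ) (F P : R' r) (e : ℤ) :
    PhiMinus r κ (F * P) e = PhiMinus r κ F e * P + F * PhiMinus r κ P e := by
  simp only [PhiMinus, aR_mul, Finset.sum_mul, Finset.mul_sum, ← Finset.sum_add_distrib]
  refine Finset.sum_congr rfl fun n _ => ?_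
  split_ifs
  · simp only [mul_add, smul_add, smul_mul_assoc, mul_smul_comm, mul_assoc, mul_left_comm F]
  · simp

lemma aR_phiMu (r : ℕ) (κ : ℂ) (hκ : κ ≠ 0) (m : ℕ) :
    aR r κ m (phiMu r κ)
      = ∑ q : Fin r, if (q : ℕ) + 1 = m then MvPolynomial.X (Sum.inr (Sum.inr q)) else 0 := by
  simp only [aR, phiMu, map_sum, Finset.smul_sum]
  refine Finset.sum_congr rfl fun q _ => ?_
  simp only [MvPolynomial.pderiv_mul, MvPolynomial.pderiv_C, MvPolynomial.pderiv_X,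
    Pi.single_apply, Sum.inl.injEq, reduceCtorEq, if_false, mul_zero, zero_mul, zero_add, add_zero]
  split_ifs with hqm hqm'
  · rw [mul_one, MvPolynomial.smul_eq_C_mul, ← mul_assoc, ← MvPolynomial.C_mul, ← hqm']
    have hq : ((q : ℕ) : ℂ) + 1 ≠ 0 := by norm_cast
    rw [Nat.cast_add_one, mul_one_div_cancel (by simp [hκ, hq]), MvPolynomial.C_1, one_mul]
  · -- `m = 0`, where `m - 1` truncates to `0` but `a_0 = 0`
    simp [show m = 0 by omega]
  · omega
  · simp

lemma choose_div_succ {K : Type*} [Field K] [CharZero K] (N k : ℕ) :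
    (N.choose k : K) / (k + 1) = ((N + 1).choose (k + 1) : K) / (N + 1) := by
  rw [div_eq_div_iff (Nat.cast_add_one_ne_zero k) (Nat.cast_add_one_ne_zero N)]
  exact_mod_cast (mul_comm _ _).trans (Nat.add_one_mul_choose_eq N k)

lemma PhiMinus_coeff_eq_fk_coeff (κ : ℂ) (n q : ℕ) :
    (1 / (2 * κ)) * (1 / ((n : ℂ) + 1)) * (-1 : ℂ) ^ n * ((q + 1 + n).choose n : ℂ)
      = (1 / (2 * κ)) * ((n + q + 2).choose (n + 1) : ℂ) * (-1 : ℂ) ^ (n + 2)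
          / ((n : ℂ) + (q : ℂ) + 2) := by
  have h := choose_div_succ (K := ℂ) (q + 1 + n) n
  rw [show n + q + 2 = q + 1 + n + 1 by ring]
  push_cast at h ⊢
  linear_combination (1 / (2 * κ)) * (-1 : ℂ) ^ n * h

lemma PhiMinus_phiMu (r : ℕ) (κ : ℂ) (hκ : κ ≠ 0) (e : ℤ) :
    PhiMinus r κ (phiMu r κ) e = fk r κ e := by
  simp only [PhiMinus, fk, aR_phiMu r κ hκ, Finset.mul_sum, Finset.smul_sum]
  refine Finset.sum_congr rfl fun n _ => ?_
  split_ifs with he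
  · refine Finset.sum_congr rfl fun q _ => ?_
    simp only [mul_ite, mul_zero, smul_ite, smul_zero]
    split_ifs with hq hq'
    · rw [← hq, PhiMinus_coeff_eq_fk_coeff, MvPolynomial.smul_eq_C_mul, ← mul_assoc]
    · omega
    · omega
    · rfl
  · exact (Finset.sum_eq_zero fun q _ => if_neg (by omega)).symm

theorem statement8 (r : ℕ) (κ : ℂ) (hκ : κ ≠ 0) (P : R' r) (e : ℤ) :
    PhiMinus r κ (phiMu r κ * P) e - phiMu r κ * PhiMinus r κ P e
      = fk r κ e * P := by
  rw [PhiMinus_mul, add_sub_cancel_right, PhiMinus_phiMu r κ hκ]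

end
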